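/- Reduction to the strongest cyclic inequalities: let n ≥ 2 and let S be a real-valued function on the subsets of {1,…,n} with S(∅) = 0 satisfying, for all pairwise disjoint X, Y, Z ⊆ {1,…,n}, strong subadditivity S(X∪Y) + S(Y∪Z) ≥ S(Y) + S(X∪Y∪Z) and weak monotonicity S(X∪Y) + S(Y∪Z) ≥ S(X) + S(Z). Suppose furthermore that for every integer l ≥ 1 and every partition of {1,…,n} into 2l+1 cyclically consecutive nonempty blocks B_1,…,B_{2l+1}, the coarse-grained entropies Ŝ(J) := S(∪_{j∈J} B_j), J ⊆ {1,…,2l+1}, satisfy the cyclic inequality C_{2l+1}(l+1, l) ≥ 0. Then: if n = 2k+1 with k ≥ 1, C_n(k+1, k−1) ≥ 0; and if n = 2k with k ≥ 1, both C_n(k+1, k−1) ≥ 0 and C_n(k, k−1) ≥ 0. -/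

import Mathlib

/-- The cyclic window of `a` consecutive elements starting at `i` (indices mod `n`);
summing over all `i` this gives the windows `{i+1,…,i+a}` of the paper. -/
def cycWindow (n i a : ℕ) : Finset (Fin n) :=
  Finset.univ.filter fun j => ∃ t < a, (i + t) % n = (j : ℕ)

/-- `C_n(a) = Σ_{i=1}^n S({i+1,…,i+a})` -/
noncomputable def cycC {n : ℕ} (S : Finset (Fin n) → ℝ) (a : ℕ) : ℝ :=
  ∑ i ∈ Finset.range n, S (cycWindow n i a)

/-- `C_n(a,b) = C_n(a) − C_n(b) − S({1,…,n})` -/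
noncomputable def cycCab {n : ℕ} (S : Finset (Fin n) → ℝ) (a b : ℕ) : ℝ :=
  cycC S a - cycC S b - S Finset.univ

/-!
Strong subadditivity applied to three adjacent windows makes `a ↦ C_n(a)` concave, and weak
monotonicity makes `S ≥ 0`. Hence it suffices to show `C_n(k+1) - C_n(k) ≥ S(univ)` when
`n = 2k+1`, and `C_n(k+1) - C_n(k-1) ≥ 2 S(univ)` when `n = 2k`.

For odd `n` the first bound is the hypothesis for singleton blocks. For `n = 2k ≥ 4`, partition
the cycle into `2k-1` blocks, all singletons except one pair, and sum the hypothesis over all `n`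
rotations of this partition. A window of `a` consecutive blocks is a window of `a` or `a+1` sites,
the latter for exactly `a` of the `2k-1` starting blocks, so the sum of the coarse-grained
`C_{2k-1}(k, k-1)` equals `k (C_n(k+1) - C_n(k-1) - 2 S(univ))`. For `n = 2` the bound is an
equality.
-/

open Finset Fin.NatCast

section Windows

variable {n : ℕ}

lemma mem_cycWindow {i a : ℕ} {j : Fin n} :
    j ∈ cycWindow n i a ↔ ∃ t < a, (i + t) % n = j := by
  simp [cycWindow]

lemma cycWindow_zero (n i : ℕ) : cycWindow n i 0 = ∅ := by
  ext j
  simp [mem_cycWindow]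

lemma cycWindow_one (n i : ℕ) [NeZero n] : cycWindow n i 1 = {((i : ℕ) : Fin n)} := by
  ext j
  simp [mem_cycWindow, Fin.ext_iff, eq_comm]

lemma cycWindow_union (n i a b : ℕ) :
    cycWindow n i a ∪ cycWindow n (i + a) b = cycWindow n i (a + b) := by
  ext j
  simp only [mem_union, mem_cycWindow]
  constructor
  · rintro (⟨t, ht, hj⟩ | ⟨t, ht, hj⟩)
    · exact ⟨t, by omega, hj⟩
    · exact ⟨a + t, by omega, by rwa [← add_assoc]⟩
  · rintro ⟨t, ht, hj⟩
    rcases lt_or_ge t a with h | h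
    · exact Or.inl ⟨t, h, hj⟩
    · exact Or.inr ⟨t - a, by omega, by rwa [add_assoc, Nat.add_sub_cancel' h]⟩

lemma disjoint_cycWindow (i : ℕ) {a b : ℕ} (h : a + b ≤ n) :
    Disjoint (cycWindow n i a) (cycWindow n (i + a) b) := by
  rw [disjoint_left]
  rintro j hj hj'
  obtain ⟨t, ht, he⟩ := mem_cycWindow.1 hj
  obtain ⟨t', ht', he'⟩ := mem_cycWindow.1 hj'
  have hmod : t ≡ a + t' [MOD n] :=
    Nat.ModEq.add_left_cancel' i (by rw [← add_assoc]; exact he.trans he'.symm)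
  rw [Nat.ModEq, Nat.mod_eq_of_lt (by omega), Nat.mod_eq_of_lt (by omega)] at hmod
  omega

lemma cycWindow_self (i : ℕ) : cycWindow n i n = univ := by
  ext j
  have hn : 0 < n := j.pos
  simp only [mem_cycWindow, mem_univ, iff_true]
  refine ⟨(n - i % n + j) % n, Nat.mod_lt _ hn, ?_⟩
  rw [Nat.add_mod_mod, ← Nat.mod_add_mod, ← add_assoc, Nat.add_sub_cancel' (Nat.mod_lt _ hn).le,
    Nat.add_mod_left, Nat.mod_eq_of_lt j.isLt]

lemma cycWindow_periodic (n a : ℕ) : Function.Periodic (fun i => cycWindow n i a) n := by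
  intro i
  ext j
  simp [mem_cycWindow, Nat.add_right_comm i n, Nat.add_mod_right]

end Windows

lemma Function.Periodic.sum_range_comp_add {M : Type*} [AddCancelCommMonoid M] {f : ℕ → M}
    {n : ℕ} (hf : Function.Periodic f n) (d : ℕ) :
    ∑ s ∈ range n, f (s + d) = ∑ s ∈ range n, f s := by
  induction d with
  | zero => rfl
  | succ d ih =>
    have h := (sum_range_succ' (fun s => f (s + d)) n).symm.trans
      (sum_range_succ (fun s => f (s + d)) n)
    rw [zero_add, add_comm n d, hf d, add_left_inj, ih] at h
    simpa only [Nat.add_right_comm _ 1 d, ← add_assoc] using h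

lemma sum_cycWindow_add {n : ℕ} (S : Finset (Fin n) → ℝ) (b d : ℕ) :
    ∑ s ∈ range n, S (cycWindow n (s + d) b) = cycC S b :=
  ((cycWindow_periodic n b).comp S).sum_range_comp_add d

lemma cycC_zero {n : ℕ} {S : Finset (Fin n) → ℝ} (h0 : S ∅ = 0) : cycC S 0 = 0 := by
  simp [cycC, cycWindow_zero, h0]

lemma cycC_self {n : ℕ} (S : Finset (Fin n) → ℝ) : cycC S n = n * S univ := by
  simp [cycC, cycWindow_self]

section Entropy

variable {α : Type*} [DecidableEq α]

def StrongSubadditive (S : Finset α → ℝ) : Prop :=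
  ∀ X Y Z : Finset α, Disjoint X Y → Disjoint Y Z → Disjoint X Z →
    S (X ∪ Y) + S (Y ∪ Z) ≥ S Y + S (X ∪ Y ∪ Z)

def WeaklyMonotone (S : Finset α → ℝ) : Prop :=
  ∀ X Y Z : Finset α, Disjoint X Y → Disjoint Y Z → Disjoint X Z →
    S (X ∪ Y) + S (Y ∪ Z) ≥ S X + S Z

lemma WeaklyMonotone.nonneg {S : Finset α → ℝ} (hS : WeaklyMonotone S) (h0 : S ∅ = 0)
    (A : Finset α) : 0 ≤ S A := by
  have := hS ∅ A ∅ (disjoint_empty_left A) (disjoint_empty_right A) (disjoint_empty_left ∅)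
  simp only [empty_union, union_empty, h0] at this
  linarith

end Entropy

lemma StrongSubadditive.cycWindow_add_two {n : ℕ} {S : Finset (Fin n) → ℝ}
    (hS : StrongSubadditive S) (i : ℕ) {a : ℕ} (ha : a + 2 ≤ n) :
    S (cycWindow n (i + 1) a) + S (cycWindow n i (a + 2)) ≤
      S (cycWindow n i (a + 1)) + S (cycWindow n (i + 1) (a + 1)) := by
  have hXY := cycWindow_union n i 1 a
  have hYZ := cycWindow_union n (i + 1) a 1
  have hXYZ : cycWindow n i (1 + a) ∪ cycWindow n (i + 1 + a) 1 = cycWindow n i (a + 2) := by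
    rw [add_assoc, cycWindow_union, add_comm 1 a]
  have hXZ : Disjoint (cycWindow n i 1) (cycWindow n (i + 1 + a) 1) := by
    have := disjoint_cycWindow (n := n) i (a := 1 + a) (b := 1) (by omega)
    rw [← add_assoc, ← hXY] at this
    exact this.mono_left subset_union_left
  have h := hS _ _ _ (disjoint_cycWindow i (by omega)) (disjoint_cycWindow (i + 1) (by omega)) hXZ
  rw [hXY, hYZ, hXYZ, add_comm 1 a] at h
  linarith

lemma StrongSubadditive.cycC_concave {n : ℕ} {S : Finset (Fin n) → ℝ}
    (hS : StrongSubadditive S) {a : ℕ} (ha : a + 2 ≤ n) :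
    cycC S a + cycC S (a + 2) ≤ 2 * cycC S (a + 1) := by
  have h := sum_le_sum fun i (_ : i ∈ range n) => hS.cycWindow_add_two i ha
  rw [sum_add_distrib, sum_add_distrib, sum_cycWindow_add, sum_cycWindow_add] at h
  unfold cycC at *
  linarith

section Blocks

variable {m : ℕ} (c : Fin m → ℕ)

/-- Block `j` of the partition with sizes `c` starts at `s + cycPrefixSum c j`; the sizes are
extended `m`-periodically, so that `a` consecutive blocks starting at block `i` make up a cyclic
window of `cycPrefixSum c (i + a) - cycPrefixSum c i` sites. -/
def cycPrefixSum [NeZero m] (x : ℕ) : ℕ :=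
  ∑ t ∈ range x, c t

/-- The coarse-grained entropy `Ŝ` of the paper, for the blocks of sizes `c` starting at `s`. -/
def coarseGrain {n : ℕ} (S : Finset (Fin n) → ℝ) (s : ℕ) (J : Finset (Fin m)) : ℝ :=
  S (J.biUnion fun j => cycWindow n (s + ∑ j' ∈ Iio j, c j') (c j))

variable [NeZero m]

lemma cycPrefixSum_add_period (x : ℕ) :
    cycPrefixSum c (x + m) = cycPrefixSum c x + ∑ j, c j := by
  rw [cycPrefixSum, sum_range_add,
    ← Fin.sum_univ_eq_sum_range (fun t => c ((x + t : ℕ) : Fin m))]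
  congr 1
  simp only [Nat.cast_add, Fin.cast_val_eq_self]
  exact Equiv.sum_comp (Equiv.addLeft (x : Fin m)) c

lemma cycPrefixSum_period : cycPrefixSum c m = ∑ j, c j := by
  simpa [cycPrefixSum] using cycPrefixSum_add_period c 0

lemma cycPrefixSum_eq_mod_add_div (x : ℕ) :
    cycPrefixSum c x = cycPrefixSum c (x % m) + x / m * ∑ j, c j := by
  have h : ∀ r q, cycPrefixSum c (r + q * m) = cycPrefixSum c r + q * ∑ j, c j := by
    intro r q
    induction q with
    | zero => simp
    | succ q ih =>
      rw [add_mul, one_mul, ← add_assoc, cycPrefixSum_add_period, ih, add_mul, one_mul, add_assoc]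
  conv_lhs => rw [← Nat.mod_add_div' x m]
  exact h _ _

lemma cycPrefixSum_succ (x : ℕ) : cycPrefixSum c (x + 1) = cycPrefixSum c x + c x :=
  sum_range_succ _ _

lemma cycPrefixSum_mono : Monotone (cycPrefixSum c) := fun _ _ h =>
  sum_le_sum_of_subset (range_mono h)

lemma sum_Iio_eq_cycPrefixSum (j : Fin m) : ∑ j' ∈ Iio j, c j' = cycPrefixSum c j := by
  rw [cycPrefixSum, ← Nat.Iio_eq_range, ← Fin.map_valEmbedding_Iio, sum_map]
  simp [Fin.cast_val_eq_self]

variable {n : ℕ} {c}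

lemma biUnion_cycWindow_blocks (hc : ∑ j, c j = n) (s i a : ℕ) :
    (cycWindow m i a).biUnion (fun j => cycWindow n (s + ∑ j' ∈ Iio j, c j') (c j)) =
      cycWindow n (s + cycPrefixSum c i) (cycPrefixSum c (i + a) - cycPrefixSum c i) := by
  induction a with
  | zero => simp [cycWindow_zero]
  | succ a ih =>
    have hstart (b : ℕ) : cycWindow n (s + ∑ j' ∈ Iio ((i + a : ℕ) : Fin m), c j') b =
        cycWindow n (s + cycPrefixSum c (i + a)) b := by
      rw [sum_Iio_eq_cycPrefixSum, Fin.val_natCast, cycPrefixSum_eq_mod_add_div c (i + a), hc,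
        ← add_assoc]
      simpa using ((cycWindow_periodic n b).nat_mul ((i + a) / m) _).symm
    have hle := cycPrefixSum_mono c (Nat.le_add_right i a)
    have hsplit : s + cycPrefixSum c (i + a) =
        s + cycPrefixSum c i + (cycPrefixSum c (i + a) - cycPrefixSum c i) := by omega
    rw [← cycWindow_union m i a 1, cycWindow_one, union_biUnion, singleton_biUnion, ih, hstart,
      hsplit, cycWindow_union, ← add_assoc, cycPrefixSum_succ]
    congr 1
    omega

variable (S : Finset (Fin n) → ℝ)

lemma coarseGrain_univ (hc : ∑ j, c j = n) (s : ℕ) : coarseGrain c S s univ = S univ := by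
  have h := biUnion_cycWindow_blocks hc s 0 m
  rw [cycWindow_self, zero_add, cycPrefixSum_period, hc] at h
  rw [coarseGrain, h]
  simp [cycPrefixSum, cycWindow_self]

lemma sum_cycC_coarseGrain (hc : ∑ j, c j = n) (a : ℕ) :
    ∑ s ∈ range n, cycC (coarseGrain c S s) a =
      ∑ i ∈ range m, cycC S (cycPrefixSum c (i + a) - cycPrefixSum c i) := by
  simp only [cycC, coarseGrain, biUnion_cycWindow_blocks hc]
  rw [sum_comm]
  exact sum_congr rfl fun i _ => sum_cycWindow_add S _ _

lemma sum_cycCab_coarseGrain (hc : ∑ j, c j = n) (a b : ℕ) :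
    ∑ s ∈ range n, cycCab (coarseGrain c S s) a b =
      ∑ s ∈ range n, cycC (coarseGrain c S s) a -
        ∑ s ∈ range n, cycC (coarseGrain c S s) b - n * S univ := by
  simp [cycCab, sum_sub_distrib, coarseGrain_univ S hc]

end Blocks

lemma sum_cycCab_coarseGrain_one {n : ℕ} [NeZero n] (S : Finset (Fin n) → ℝ) (a b : ℕ) :
    ∑ s ∈ range n, cycCab (coarseGrain (fun _ : Fin n => 1) S s) a b = n * cycCab S a b := by
  have hc : ∑ _j : Fin n, 1 = n := by simp
  have hP (x : ℕ) : cycPrefixSum (fun _ : Fin n => 1) x = x := by simp [cycPrefixSum]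
  rw [sum_cycCab_coarseGrain S hc, sum_cycC_coarseGrain S hc, sum_cycC_coarseGrain S hc]
  simp only [hP, Nat.add_sub_cancel_left, sum_const, card_range, nsmul_eq_mul, cycCab]
  ring

def lastBlockTwo (m : ℕ) (j : Fin (m + 1)) : ℕ :=
  if j = Fin.last m then 2 else 1

lemma sum_lastBlockTwo (m : ℕ) : ∑ j, lastBlockTwo m j = m + 2 := by
  simp [Fin.sum_univ_castSucc, lastBlockTwo, (Fin.castSucc_lt_last _).ne]

lemma cycPrefixSum_lastBlockTwo (m x : ℕ) :
    cycPrefixSum (lastBlockTwo m) x = x + x / (m + 1) := by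
  have hinit : ∀ r ≤ m, cycPrefixSum (lastBlockTwo m) r = r := by
    intro r hr
    induction r with
    | zero => rfl
    | succ r ih =>
      have hne : ((r : ℕ) : Fin (m + 1)) ≠ Fin.last m := by
        simp [Fin.ext_iff, Nat.mod_eq_of_lt (show r < m + 1 by omega)]; omega
      rw [cycPrefixSum_succ, ih (by omega), lastBlockTwo, if_neg hne]
  have hx := Nat.mod_add_div' x (m + 1)
  rw [cycPrefixSum_eq_mod_add_div, sum_lastBlockTwo,
    hinit _ (Nat.lt_succ_iff.1 (Nat.mod_lt _ m.succ_pos))]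
  linarith

lemma sum_range_add_div {M a : ℕ} (ha : a ≤ M) (F : ℕ → ℝ) :
    ∑ i ∈ range M, F (a + (i + a) / M) = (M - a : ℕ) * F a + a * F (a + 1) := by
  obtain ⟨d, rfl⟩ := Nat.exists_eq_add_of_le' ha
  have hlow : ∀ i ∈ range d, F (a + (i + a) / (d + a)) = F a := fun i hi => by
    rw [Nat.div_eq_of_lt (by simp at hi; omega), add_zero]
  have hhigh : ∀ j ∈ range a, F (a + (d + j + a) / (d + a)) = F (a + 1) := fun j hj => by
    rw [Nat.div_eq_of_lt_le (k := 1) (by omega) (by simp at hj; omega)]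
  rw [sum_range_add, sum_congr rfl hlow, sum_congr rfl hhigh]
  simp

lemma sum_cycC_coarseGrain_lastBlockTwo {n m : ℕ} (hn : n = m + 2) (S : Finset (Fin n) → ℝ)
    {a : ℕ} (ha : a ≤ m + 1) :
    ∑ s ∈ range n, cycC (coarseGrain (lastBlockTwo m) S s) a =
      (m + 1 - a : ℕ) * cycC S a + a * cycC S (a + 1) := by
  rw [sum_cycC_coarseGrain S (by rw [sum_lastBlockTwo, hn]), ← sum_range_add_div ha (cycC S)]
  refine sum_congr rfl fun i hi => ?_
  rw [cycPrefixSum_lastBlockTwo, cycPrefixSum_lastBlockTwo, Nat.div_eq_of_lt (mem_range.1 hi),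
    add_zero, add_assoc, Nat.add_sub_cancel_left]

lemma two_mul_le_cycC_sub_of_coarseGrain {n l : ℕ} (hn : n = 2 * l + 2)
    (S : Finset (Fin n) → ℝ)
    (h : 0 ≤ ∑ s ∈ range n, cycCab (coarseGrain (lastBlockTwo (2 * l)) S s) (l + 1) l) :
    2 * S univ ≤ cycC S (l + 2) - cycC S l := by
  subst hn
  rw [sum_cycCab_coarseGrain S (sum_lastBlockTwo _),
    sum_cycC_coarseGrain_lastBlockTwo rfl S (by omega),
    sum_cycC_coarseGrain_lastBlockTwo rfl S (by omega),
    show 2 * l + 1 - (l + 1) = l by omega, show 2 * l + 1 - l = l + 1 by omega] at h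
  have hfac : 0 ≤ ((l : ℝ) + 1) * (cycC S (l + 2) - cycC S l - 2 * S univ) := by
    push_cast at h
    linarith
  linarith [nonneg_of_mul_nonneg_right hfac (by positivity)]

theorem stmt15_general (n : ℕ) (S : Finset (Fin n) → ℝ) (h0 : S ∅ = 0)
    (hSSA : ∀ X Y Z : Finset (Fin n), Disjoint X Y → Disjoint Y Z → Disjoint X Z →
      S (X ∪ Y) + S (Y ∪ Z) ≥ S Y + S (X ∪ Y ∪ Z))
    (hWM : ∀ X Y Z : Finset (Fin n), Disjoint X Y → Disjoint Y Z → Disjoint X Z →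
      S (X ∪ Y) + S (Y ∪ Z) ≥ S X + S Z)
    (hcyc : ∀ l : ℕ, 1 ≤ l → ∀ s : ℕ, ∀ c : Fin (2 * l + 1) → ℕ,
      (∀ j, 1 ≤ c j) → (∑ j, c j) = n →
      0 ≤ cycCab (fun J : Finset (Fin (2 * l + 1)) =>
            S (J.biUnion fun j =>
              cycWindow n (s + ∑ j' ∈ Finset.Iio j, c j') (c j))) (l + 1) l) :
    (∀ k : ℕ, 1 ≤ k → n = 2 * k + 1 → 0 ≤ cycCab S (k + 1) (k - 1)) ∧
    (∀ k : ℕ, 1 ≤ k → n = 2 * k →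
      0 ≤ cycCab S (k + 1) (k - 1) ∧ 0 ≤ cycCab S k (k - 1)) := by
  have hSu : 0 ≤ S univ := WeaklyMonotone.nonneg hWM h0 univ
  have hconc (k : ℕ) (hk : 1 ≤ k) (hkn : k + 1 ≤ n) :
      cycC S (k - 1) + cycC S (k + 1) ≤ 2 * cycC S k := by
    obtain ⟨a, rfl⟩ : ∃ a, k = a + 1 := ⟨k - 1, by omega⟩
    simpa using StrongSubadditive.cycC_concave hSSA (a := a) (by omega)
  refine ⟨fun k hk hnk => ?_, fun k hk hnk => ?_⟩
  · subst hnk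
    have hsum :
        0 ≤ ∑ s ∈ range (2 * k + 1), cycCab (coarseGrain (fun _ => 1) S s) (k + 1) k :=
      sum_nonneg fun s _ => hcyc k hk s (fun _ => 1) (fun _ => le_rfl) (by simp)
    rw [sum_cycCab_coarseGrain_one] at hsum
    have hstep := nonneg_of_mul_nonneg_right hsum (by positivity)
    unfold cycCab at hstep ⊢
    linarith [hconc k hk (by omega)]
  · subst hnk
    have hgap : 2 * S univ ≤ cycC S (k + 1) - cycC S (k - 1) := by
      obtain rfl | ⟨l, rfl, hl⟩ : k = 1 ∨ ∃ l, k = l + 1 ∧ 1 ≤ l :=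
        (eq_or_lt_of_le hk).imp Eq.symm fun h => ⟨k - 1, by omega, by omega⟩
      · simpa [cycC_zero h0] using (cycC_self S).ge
      · exact two_mul_le_cycC_sub_of_coarseGrain (by ring) S (sum_nonneg fun s _ =>
          hcyc l hl s (lastBlockTwo (2 * l)) (fun j => by unfold lastBlockTwo; split <;> omega)
            (by rw [sum_lastBlockTwo]; ring))
    unfold cycCab
    constructor <;> linarith [hconc k hk (by omega)]

/-- Reduction to the strongest cyclic inequalities: assume `S` is an
abstract entropy function with `S(∅) = 0` satisfying SSA and WM, and assume that for
every `l ≥ 1` and every partition of the cycle `{1,…,n}` into `2l+1` cyclically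
consecutive nonempty blocks (given by a starting point `s` and block sizes `c j ≥ 1`
with `Σ c j = n`), the coarse-grained entropies `Ŝ(J) = S(∪_{j∈J} B_j)` satisfy
`C_{2l+1}(l+1,l) ≥ 0`.  Then `C_n(k+1,k−1) ≥ 0` for `n = 2k+1`, and both
`C_n(k+1,k−1) ≥ 0` and `C_n(k,k−1) ≥ 0` for `n = 2k`. -/
theorem stmt15 (n : ℕ) (hn : 2 ≤ n) (S : Finset (Fin n) → ℝ) (h0 : S ∅ = 0)
    (hSSA : ∀ X Y Z : Finset (Fin n), Disjoint X Y → Disjoint Y Z → Disjoint X Z →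
      S (X ∪ Y) + S (Y ∪ Z) ≥ S Y + S (X ∪ Y ∪ Z))
    (hWM : ∀ X Y Z : Finset (Fin n), Disjoint X Y → Disjoint Y Z → Disjoint X Z →
      S (X ∪ Y) + S (Y ∪ Z) ≥ S X + S Z)
    (hcyc : ∀ l : ℕ, 1 ≤ l → ∀ s : ℕ, ∀ c : Fin (2 * l + 1) → ℕ,
      (∀ j, 1 ≤ c j) → (∑ j, c j) = n →
      0 ≤ cycCab (fun J : Finset (Fin (2 * l + 1)) =>
            S (J.biUnion fun j =>
              cycWindow n (s + ∑ j' ∈ Finset.Iio j, c j') (c j))) (l + 1) l) :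
    (∀ k : ℕ, 1 ≤ k → n = 2 * k + 1 → 0 ≤ cycCab S (k + 1) (k - 1)) ∧
    (∀ k : ℕ, 1 ≤ k → n = 2 * k →
      0 ≤ cycCab S (k + 1) (k - 1) ∧ 0 ≤ cycCab S k (k - 1)) :=
  stmt15_general n S h0 hSSA hWM hcyc
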